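/- arXiv:0704.0824 — 7 statements merged into one kernel-verified Lean document; each statement's English description precedes it below -/
import Mathlib

section
/- Let A be a ℤ-graded associative algebra with degree-one derivations d and e such that d³ = 0. Then (d+e)⁴ = 0 (i.e., d+e deforms the 3-dga A into a 4-dga) if and only if (e⁴ + e²∘d(e) + d(e)∘e² + d²(e)∘e + e∘d²(e) + d(e)∘d(e) + d³(e)) + 2(e² + d(e))∘d² = 0, where d(e) = d∘e + e∘d, d²(e) = d∘d(e) − d(e)∘d and d³(e) = d∘d²(e) + d²(e)∘d. -/
/-- Let `A` be a ℤ-graded associative algebra with degree-one derivations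
`d` and `e` such that `d³ = 0`.  Then `(d+e)⁴ = 0` if and only if
`(e⁴ + e²∘d(e) + d(e)∘e² + d²(e)∘e + e∘d²(e) + d(e)∘d(e) + d³(e)) + 2(e² + d(e))∘d² = 0`,
where `d(e) = d∘e + e∘d`, `d²(e) = d∘d(e) − d(e)∘d` and `d³(e) = d∘d²(e) + d²(e)∘d`. -/
theorem three_dga_deformation_into_four_dga
    {K A : Type*} [Field K] [Ring A] [Algebra K A]
    (𝒜 : ℤ → Submodule K A) [GradedAlgebra 𝒜]
    (d e : Module.End K A)
    (hd_deg : ∀ (i : ℤ), ∀ a ∈ 𝒜 i, d a ∈ 𝒜 (i + 1))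
    (he_deg : ∀ (i : ℤ), ∀ a ∈ 𝒜 i, e a ∈ 𝒜 (i + 1))
    (hd_leib : ∀ (i : ℤ), ∀ a ∈ 𝒜 i, ∀ b : A,
      d (a * b) = d a * b + ((i.negOnePow : ℤ)) • (a * d b))
    (he_leib : ∀ (i : ℤ), ∀ a ∈ 𝒜 i, ∀ b : A,
      e (a * b) = e a * b + ((i.negOnePow : ℤ)) • (a * e b))
    (hd3 : d ^ 3 = 0) :
    (d + e) ^ 4 = 0 ↔
      (e ^ 4 + e ^ 2 * (d * e + e * d) + (d * e + e * d) * e ^ 2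
          + (d * (d * e + e * d) - (d * e + e * d) * d) * e
          + e * (d * (d * e + e * d) - (d * e + e * d) * d)
          + (d * e + e * d) * (d * e + e * d)
          + (d * (d * (d * e + e * d) - (d * e + e * d) * d)
              + (d * (d * e + e * d) - (d * e + e * d) * d) * d))
        + 2 • ((e ^ 2 + (d * e + e * d)) * d ^ 2) = 0 := by
  have h3 : d * (d * d) = 0 := by
    have := hd3
    rwa [pow_succ, pow_succ, pow_one, mul_assoc] at this
  have z1 : d * (d * (d * e)) = 0 := by rw [← mul_assoc, ← mul_assoc, mul_assoc d d d, h3, zero_mul]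
  have z2 : d * (d * (d * d)) = 0 := by rw [h3, mul_zero]
  have z3 : e * (d * (d * d)) = 0 := by rw [h3, mul_zero]
  have key : (d + e) ^ 4 =
      (e ^ 4 + e ^ 2 * (d * e + e * d) + (d * e + e * d) * e ^ 2
          + (d * (d * e + e * d) - (d * e + e * d) * d) * e
          + e * (d * (d * e + e * d) - (d * e + e * d) * d)
          + (d * e + e * d) * (d * e + e * d)
          + (d * (d * (d * e + e * d) - (d * e + e * d) * d)
              + (d * (d * e + e * d) - (d * e + e * d) * d) * d))
        + 2 • ((e ^ 2 + (d * e + e * d)) * d ^ 2) := by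
    simp only [pow_succ, pow_zero, one_mul, mul_add, add_mul, sub_mul, mul_sub, mul_assoc,
      z1, z2, z3, mul_zero, zero_mul, two_smul]
    abel
  rw [key]
end

section
/- Let (A,d) be an N-differential graded algebra (d^N = 0) and e a degree-one derivation on A. Let t be a formal parameter with t² = 0 (work over k[t]/(t²), extending d and e t-linearly). Then (d + te)^N = t · Σ_{k=0}^{N−1} ( Σ_{p ∈ Par(k, N−k+1)} (−1)^{w(p)} ) · d^{N−k−1}(e) ∘ d^{k}, where Par(k,m) = { p = (p₁,…,p_m) ∈ ℕ^m : Σᵢ pᵢ = k }, w(p) = Σ_{i=1}^{m} (i−1)pᵢ, and d^{j}(e) denotes the j-th iterated graded commutator of d with e. -/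
/-- `dIter d e j` is the `j`-th iterated graded commutator `d^{(j)}(e)` of the degree-one
derivation `d` with the degree-one derivation `e`:  `dIter d e 0 = e` and
`d^{j+1}(e) = d ∘ d^{j}(e) − (−1)^{j+1} d^{j}(e) ∘ d` (since `d^{j}(e)` has degree `j+1`). -/
def dIter {K A : Type*} [Field K] [Ring A] [Algebra K A]
    (d e : Module.End K A) : ℕ → Module.End K A
  | 0 => e
  | j + 1 => d * dIter d e j - ((-1 : ℤ) ^ (j + 1)) • (dIter d e j * d)

/-- `Par(k, m)` from the paper: the tuples `p : Fin m → ℕ` with `∑ pᵢ = k`, and for each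
such `p` the sign `(−1)^{w(p)}` with `w(p) = Σᵢ (i−1)pᵢ` (one-based), summed up. -/
def parSignSum (k m : ℕ) : ℤ :=
  ∑ p ∈ Finset.Nat.antidiagonalTuple m k, (-1 : ℤ) ^ (∑ i : Fin m, (i : ℕ) * p i)

/-!
Because `ε² = 0`, `(d + εe)^N = d^N + ε · ∑_{j+k=N-1} d^j e d^k`, and `d^N = 0` kills the first
term. Moving each `d` of `d^j` to the right across `e` with `d ∘ X = d(X) ± X ∘ d` turns
`∑_{j+k=n} d^j e d^k` into a signed combination of the `d^{(j)}(e) ∘ d^k`, whose coefficients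
`c(k, j)` obey `c(k+1, j+1) = c(k+1, j) + (-1)^j c(k, j+1)` with `c(0, j) = c(k, 1) = 1`.
Splitting a tuple of `Par(k+1, j+1)` according to its last entry shows that the sums
`∑_{p ∈ Par(k, j+1)} (-1)^{w(p)}` satisfy the same recursion.
-/

open Finset TrivSqZeroExt DualNumber

lemma parSignSum_zero_left (m : ℕ) : parSignSum 0 m = 1 := by
  simp [parSignSum, Nat.antidiagonalTuple_zero_right]

lemma parSignSum_one_right (k : ℕ) : parSignSum k 1 = 1 := by
  simp [parSignSum, Nat.antidiagonalTuple_one]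

lemma parSignSum_succ_right (k m : ℕ) :
    parSignSum k (m + 1)
      = ∑ p ∈ antidiagonal k, (-1 : ℤ) ^ (m * p.1) * parSignSum p.2 m := by
  simp_rw [parSignSum, mul_sum, ← pow_add]
  rw [sum_sigma']
  refine sum_nbij' (fun p ↦ ⟨(p (Fin.last m), ∑ i : Fin m, p i.castSucc), Fin.init p⟩)
    (fun x ↦ Fin.snoc x.2 x.1.1) ?_ ?_ ?_ ?_ ?_
  · intro p hp
    rw [Nat.mem_antidiagonalTuple, Fin.sum_univ_castSucc] at hp
    simp only [mem_sigma, HasAntidiagonal.mem_antidiagonal, Nat.mem_antidiagonalTuple]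
    exact ⟨by rw [← hp, add_comm], rfl⟩
  · rintro ⟨⟨a, b⟩, q⟩ hx
    simp only [mem_sigma, HasAntidiagonal.mem_antidiagonal,
      Nat.mem_antidiagonalTuple] at hx ⊢
    simp [Fin.sum_univ_castSucc, hx.2, ← hx.1, add_comm]
  · intro p _
    simp
  · rintro ⟨⟨a, b⟩, q⟩ hx
    simp only [mem_sigma, Nat.mem_antidiagonalTuple] at hx
    simp [Fin.init_snoc, hx.2]
  · intro p _
    rw [Fin.sum_univ_castSucc, Fin.val_last, add_comm]
    rfl

lemma parSignSum_succ_succ (k m : ℕ) :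
    parSignSum (k + 1) (m + 1) = parSignSum (k + 1) m + (-1 : ℤ) ^ m * parSignSum k (m + 1) := by
  rw [parSignSum_succ_right, Nat.sum_antidiagonal_succ, parSignSum_succ_right, mul_sum]
  congr 1
  · simp
  · refine sum_congr rfl fun p _ ↦ ?_
    rw [← mul_assoc, ← pow_add, mul_add_one, add_comm]

section IteratedCommutator

variable {K A : Type*} [Field K] [Ring A] [Algebra K A] (d e : Module.End K A)

lemma mul_dIter_mul_pow (j k : ℕ) :
    d * (dIter d e j * d ^ k)
      = dIter d e (j + 1) * d ^ k + (-1 : ℤ) ^ (j + 1) • (dIter d e j * d ^ (k + 1)) := by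
  simp only [dIter, sub_mul, smul_mul_assoc, mul_assoc, pow_succ']
  abel

/-- The right-hand side of the formula for `N = n + 1`, indexed by `k + j = n` with
`j = N - k - 1`. -/
def dIterExpansion (n : ℕ) : Module.End K A :=
  ∑ p ∈ antidiagonal n, parSignSum p.1 (p.2 + 2) • (dIter d e p.2 * d ^ p.1)

lemma dIterExpansion_succ (n : ℕ) :
    dIterExpansion d e (n + 1) = e * d ^ (n + 1) + d * dIterExpansion d e n := by
  -- Both sides are compared through `∑ G`, split once at its first and once at its last term.
  set G : ℕ × ℕ → Module.End K A :=
    fun p ↦ parSignSum p.1 (p.2 + 1) • (dIter d e p.2 * d ^ p.1) with hG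
  have hG_succ : ∑ p ∈ antidiagonal (n + 1), G p
      = dIter d e (n + 1) + ∑ p ∈ antidiagonal n,
          parSignSum (p.1 + 1) (p.2 + 1) • (dIter d e p.2 * d ^ (p.1 + 1)) := by
    rw [Nat.sum_antidiagonal_succ, hG]
    simp [parSignSum_zero_left]
  have hG_succ' : ∑ p ∈ antidiagonal (n + 1), G p
      = e * d ^ (n + 1) + ∑ p ∈ antidiagonal n,
          parSignSum p.1 (p.2 + 2) • (dIter d e (p.2 + 1) * d ^ p.1) := by
    rw [Nat.sum_antidiagonal_succ', hG]
    simp [parSignSum_one_right, dIter]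
  calc dIterExpansion d e (n + 1)
      = dIter d e (n + 1) + ∑ p ∈ antidiagonal n,
          (parSignSum (p.1 + 1) (p.2 + 1) • (dIter d e p.2 * d ^ (p.1 + 1))
            + ((-1 : ℤ) ^ (p.2 + 1) * parSignSum p.1 (p.2 + 2))
              • (dIter d e p.2 * d ^ (p.1 + 1))) := by
        rw [dIterExpansion, Nat.sum_antidiagonal_succ, parSignSum_zero_left, one_smul, pow_zero,
          mul_one]
        congr 1
        refine sum_congr rfl fun p _ ↦ ?_
        rw [parSignSum_succ_succ, add_smul]
    _ = e * d ^ (n + 1) + d * dIterExpansion d e n := by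
        rw [sum_add_distrib, ← add_assoc, ← hG_succ, hG_succ', add_assoc, dIterExpansion, mul_sum,
          ← sum_add_distrib]
        congr 1
        refine sum_congr rfl fun p _ ↦ ?_
        rw [mul_smul_comm, mul_dIter_mul_pow, smul_add, smul_smul, mul_comm]

lemma sum_antidiagonal_pow_mul_mul_pow (n : ℕ) :
    ∑ p ∈ antidiagonal n, d ^ p.2 * e * d ^ p.1 = dIterExpansion d e n := by
  induction n with
  | zero => simp [dIterExpansion, parSignSum_zero_left, dIter]
  | succ n ih =>
    rw [Nat.sum_antidiagonal_succ', dIterExpansion_succ, ← ih, mul_sum]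
    simp only [pow_zero, one_mul, pow_succ', mul_assoc]

end IteratedCommutator

namespace DualNumber

variable {R : Type*} [Semiring R]

lemma eps_mul_inl (r : R) : (ε * inl r : R[ε]) = inr r := by
  ext <;> simp

lemma inl_add_inr_pow_succ (x y : R) (n : ℕ) :
    (inl x + inr y : R[ε]) ^ (n + 1)
      = inl (x ^ (n + 1)) + inr (∑ p ∈ antidiagonal n, x ^ p.2 * y * x ^ p.1) := by
  induction n with
  | zero => simp
  | succ n ih =>
    rw [pow_succ', ih, Nat.sum_antidiagonal_succ', inr_add]
    simp only [add_mul, mul_add, inl_mul_inl, inl_mul_inr, inr_mul_inl, inr_mul_inr, op_smul_eq_mul,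
      smul_eq_mul, mul_sum, pow_succ', pow_zero, one_mul, mul_assoc, add_zero]
    rw [add_assoc]

end DualNumber

theorem infinitesimal_deformation_formula_general
    {K A : Type*} [Field K] [Ring A] [Algebra K A]
    (d e : Module.End K A)
    (N : ℕ) (hdN : d ^ N = 0) :
    ((TrivSqZeroExt.inl d : DualNumber (Module.End K A))
        + DualNumber.eps * TrivSqZeroExt.inl e) ^ N
      = DualNumber.eps * TrivSqZeroExt.inl
          (∑ k ∈ Finset.range N,
            parSignSum k (N - k + 1) • (dIter d e (N - k - 1) * d ^ k)) := by
  rw [eps_mul_inl, eps_mul_inl]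
  obtain _ | n := N
  · rw [pow_zero] at hdN ⊢
    rw [← inl_one, hdN]
    simp
  rw [inl_add_inr_pow_succ, hdN, inl_zero, zero_add, sum_antidiagonal_pow_mul_mul_pow,
    dIterExpansion, Nat.sum_antidiagonal_eq_sum_range_succ_mk]
  refine congrArg inr (sum_congr rfl fun k hk ↦ ?_)
  have hkn : k ≤ n := Nat.lt_succ_iff.mp (mem_range.mp hk)
  rw [show n + 1 - k + 1 = n - k + 2 by omega, show n + 1 - k - 1 = n - k by omega]

/-- Let `(A,d)` be an `N`-dga (`d^N = 0`) and `e` a degree-one derivation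
on `A`.  Let `t` be a formal parameter with `t² = 0` (working over `k[t]/(t²)`, i.e. in the
dual numbers over `End(A)`, extending `d` and `e` `t`-linearly).  Then
`(d + te)^N = t · Σ_{k=0}^{N−1} ( Σ_{p ∈ Par(k, N−k+1)} (−1)^{w(p)} ) · d^{N−k−1}(e) ∘ d^k`. -/
theorem infinitesimal_deformation_formula
    {K A : Type*} [Field K] [Ring A] [Algebra K A]
    (𝒜 : ℤ → Submodule K A) [GradedAlgebra 𝒜]
    (d e : Module.End K A)
    (hd_deg : ∀ (i : ℤ), ∀ a ∈ 𝒜 i, d a ∈ 𝒜 (i + 1))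
    (he_deg : ∀ (i : ℤ), ∀ a ∈ 𝒜 i, e a ∈ 𝒜 (i + 1))
    (hd_leib : ∀ (i : ℤ), ∀ a ∈ 𝒜 i, ∀ b : A,
      d (a * b) = d a * b + ((i.negOnePow : ℤ)) • (a * d b))
    (he_leib : ∀ (i : ℤ), ∀ a ∈ 𝒜 i, ∀ b : A,
      e (a * b) = e a * b + ((i.negOnePow : ℤ)) • (a * e b))
    (N : ℕ) (hN : 1 ≤ N) (hdN : d ^ N = 0) :
    ((TrivSqZeroExt.inl d : DualNumber (Module.End K A))
        + DualNumber.eps * TrivSqZeroExt.inl e) ^ N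
      = DualNumber.eps * TrivSqZeroExt.inl
          (∑ k ∈ Finset.range N,
            parSignSum k (N - k + 1) • (dIter d e (N - k - 1) * d ^ k)) :=
  infinitesimal_deformation_formula_general d e N hdN
end

section
/- Fix integers n ≥ 1 and N ≥ 2. The difference operator δ on the space of difference forms of depth N on ℤⁿ satisfies δ^{n(N−1)+1} = 0; that is, D_N(ℤⁿ) with the difference operator δ is an (n(N−1)+1)-complex. -/
/-- `J − eᵢ`: the index function `J : {1,…,n} → {0,…,N−1}` with its value at `i`
decreased by `1`. -/
def decrIdx {n N : ℕ} (J : Fin n → Fin N) (i : Fin n) : Fin n → Fin N :=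
  Function.update J i ⟨(J i : ℕ) - 1, lt_of_le_of_lt (Nat.sub_le _ _) (J i).isLt⟩

/-- The difference operator `δ` on the space of difference forms of depth `N` on `ℤⁿ`,
modeled in components as families `ω = (ω_J)` indexed by `J : Fin n → Fin N` with each
component `ω_J : (Fin n → ℤ) → ℝ`:
`(δω)_J = Σ_{i : J(i)=1} (−1)^{|J_{<i}|} Δᵢ ω_{J−eᵢ} + Σ_{i : J(i)≥2} (−1)^{|J_{<i}|} ω_{J−eᵢ}`,
where `Δᵢg(m) = g(m+eᵢ) − g(m)` is the finite difference along the `i`-th direction and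
`|J_{<i}| = Σ_{k<i} J(k)`. -/
def deltaOp (n N : ℕ) (ω : (Fin n → Fin N) → (Fin n → ℤ) → ℝ) :
    (Fin n → Fin N) → (Fin n → ℤ) → ℝ :=
  fun J m =>
    ∑ i : Fin n,
      if (J i : ℕ) = 1 then
        (-1 : ℝ) ^ (∑ k ∈ Finset.univ.filter (fun k : Fin n => k < i), (J k : ℕ)) *
          (deltaOpDiff ω J m i)
      else if 2 ≤ (J i : ℕ) then
        (-1 : ℝ) ^ (∑ k ∈ Finset.univ.filter (fun k : Fin n => k < i), (J k : ℕ)) *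
          ω (decrIdx J i) m
      else 0
where
  /-- `Δᵢ ω_{J−eᵢ}` evaluated at `m`. -/
  deltaOpDiff (ω : (Fin n → Fin N) → (Fin n → ℤ) → ℝ) (J : Fin n → Fin N)
      (m : Fin n → ℤ) (i : Fin n) : ℝ :=
    ω (decrIdx J i) (Function.update m i (m i + 1)) - ω (decrIdx J i) m

/-- degree of an index -/
def degIdx {n N : ℕ} (J : Fin n → Fin N) : ℕ := ∑ i, (J i : ℕ)

lemma degIdx_decr {n N : ℕ} (J : Fin n → Fin N) (i : Fin n) (h : 1 ≤ (J i : ℕ)) :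
    degIdx (decrIdx J i) + 1 = degIdx J := by
  unfold degIdx decrIdx
  rw [← Finset.add_sum_erase _ _ (Finset.mem_univ i),
    ← Finset.add_sum_erase _ (fun k => ((J k : ℕ))) (Finset.mem_univ i)]
  have hrest : ∑ k ∈ Finset.univ.erase i,
      ((Function.update J i ⟨(J i : ℕ) - 1,
        lt_of_le_of_lt (Nat.sub_le _ _) (J i).isLt⟩ k : Fin N) : ℕ)
      = ∑ k ∈ Finset.univ.erase i, ((J k : ℕ)) :=
    Finset.sum_congr rfl (fun k hk => by
      rw [Function.update_of_ne (Finset.ne_of_mem_erase hk)])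
  rw [hrest, Function.update_self]
  simp only
  omega

lemma deltaOp_zero_of_lt {n N : ℕ} (k : ℕ) (ω : (Fin n → Fin N) → (Fin n → ℤ) → ℝ)
    (hω : ∀ J, degIdx J < k → ∀ m, ω J m = 0)
    (J : Fin n → Fin N) (hJ : degIdx J < k + 1) (m : Fin n → ℤ) :
    deltaOp n N ω J m = 0 := by
  unfold deltaOp
  apply Finset.sum_eq_zero
  intro i _
  by_cases h1 : (J i : ℕ) = 1
  · have hd : degIdx (decrIdx J i) < k := by
      have := degIdx_decr J i (by omega)
      omega
    rw [if_pos h1]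
    unfold deltaOp.deltaOpDiff
    rw [hω _ hd, hω _ hd]
    ring
  · by_cases h2 : 2 ≤ (J i : ℕ)
    · have hd : degIdx (decrIdx J i) < k := by
        have := degIdx_decr J i (by omega)
        omega
      rw [if_neg h1, if_pos h2, hω _ hd, mul_zero]
    · rw [if_neg h1, if_neg h2]

lemma iterate_deltaOp_zero {n N : ℕ} (k : ℕ) (ω : (Fin n → Fin N) → (Fin n → ℤ) → ℝ)
    (J : Fin n → Fin N) (hJ : degIdx J < k) (m : Fin n → ℤ) :
    (deltaOp n N)^[k] ω J m = 0 := by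
  induction k generalizing J m with
  | zero => omega
  | succ k ih =>
    rw [Function.iterate_succ_apply']
    exact deltaOp_zero_of_lt k _ (fun J' hJ' m' => ih J' hJ' m') J hJ m

/-- For `n ≥ 1` and `N ≥ 2`, the difference operator `δ` on difference
forms of depth `N` on `ℤⁿ` satisfies `δ^{n(N−1)+1} = 0`: `D_N(ℤⁿ)` is an
`(n(N−1)+1)`-complex. -/
theorem difference_forms_complex (n N : ℕ) (hn : 1 ≤ n) (hN : 2 ≤ N) :
    (deltaOp n N)^[n * (N - 1) + 1] = fun _ _ _ => 0 := by
  funext ω J m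
  apply iterate_deltaOp_zero
  have : degIdx J ≤ n * (N - 1) := by
    unfold degIdx
    calc ∑ i, (J i : ℕ) ≤ ∑ _i : Fin n, (N - 1) :=
          Finset.sum_le_sum (fun i _ => by have := (J i).isLt; omega)
      _ = n * (N - 1) := by simp [Finset.sum_const, mul_comm]
  omega
end

section
/- Fix N ≥ 2. On the graded algebra Ω_N(ℝ) = ℝ[x] ⊕ ⨁_{j=1}^{N−1} ℝ[x]·e_j (where e_j = d^j x has degree j, with products f·(g e_j) = (fg)e_j and e_j·e_k = 0 for j,k ≥ 1), the degree-one linear map d defined by d(f) = f′e₁ for f ∈ ℝ[x], d(f e_j) = f e_{j+1} for 1 ≤ j ≤ N−2, and d(f e_{N−1}) = 0, satisfies the graded Leibniz rule d(ab) = d(a)b + (−1)^{|a|} a d(b), satisfies d^N = 0, and satisfies d^{N−1} ≠ 0 (indeed d^{N−1}(x) = e_{N−1}). Hence Ω_N(ℝ) is a proper N-differential graded algebra. -/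
open Polynomial

/-- Multiplication on `Ω_N(ℝ) = ℝ[x] ⊕ ⨁_{j=1}^{N−1} ℝ[x]·e_j`, encoded as
`Fin N → ℝ[x]` (component `0` is the `ℝ[x]` part and component `j ≥ 1` is the coefficient
of `e_j = d^j x`): products are `f·(g e_j) = (fg) e_j` and `e_j · e_k = 0` for `j,k ≥ 1`. -/
noncomputable def omegaMul {N : ℕ} (a b : Fin N → Polynomial ℝ) : Fin N → Polynomial ℝ :=
  fun j => if (j : ℕ) = 0 then a j * b j
    else a ⟨0, j.pos⟩ * b j + a j * b ⟨0, j.pos⟩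

/-- The degree-one map `d` on `Ω_N(ℝ)`: `d(f) = f′e₁` for `f ∈ ℝ[x]`,
`d(f e_j) = f e_{j+1}` for `1 ≤ j ≤ N−2`, and `d(f e_{N−1}) = 0`. -/
noncomputable def omegaD {N : ℕ} (a : Fin N → Polynomial ℝ) : Fin N → Polynomial ℝ :=
  fun j =>
    if (j : ℕ) = 0 then 0
    else if (j : ℕ) = 1 then derivative (a ⟨0, j.pos⟩)
    else a ⟨(j : ℕ) - 1, lt_of_le_of_lt (Nat.sub_le _ _) j.isLt⟩

lemma omegaD_iter {N : ℕ} (k : ℕ) (hk : 1 ≤ k) (a : Fin N → Polynomial ℝ) (j : Fin N) :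
    (omegaD (N := N))^[k] a j =
      if (j : ℕ) < k then 0
      else if (j : ℕ) = k then derivative (a ⟨0, j.pos⟩)
      else a ⟨(j : ℕ) - k, lt_of_le_of_lt (Nat.sub_le _ _) j.isLt⟩ := by
  induction k generalizing j with
  | zero => exact absurd hk (by omega)
  | succ k ih =>
    rw [Function.iterate_succ_apply']
    have houter : omegaD ((omegaD (N := N))^[k] a) j =
        if (j : ℕ) = 0 then 0
        else if (j : ℕ) = 1 then derivative (((omegaD (N := N))^[k] a) ⟨0, j.pos⟩)
        else ((omegaD (N := N))^[k] a) ⟨(j : ℕ) - 1, lt_of_le_of_lt (Nat.sub_le _ _) j.isLt⟩ := rfl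
    rw [houter]
    rcases Nat.eq_zero_or_pos k with hk0 | hk0
    · subst hk0
      simp only [Function.iterate_zero, id_eq]
      by_cases hj0 : (j : ℕ) = 0
      · simp [hj0]
      · by_cases hj1 : (j : ℕ) = 1
        · simp [hj0, hj1]
        · split_ifs <;> first | rfl | (exfalso; omega)
    · by_cases hj0 : (j : ℕ) = 0
      · rw [if_pos hj0, if_pos (by omega : (j:ℕ) < k + 1)]
      · by_cases hj1 : (j : ℕ) = 1
        · rw [if_neg hj0, if_pos hj1, ih hk0, if_pos (show ((⟨0, j.pos⟩ : Fin N) : ℕ) < k by simpa using hk0),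
            if_pos (by omega : (j:ℕ) < k + 1)]
          simp
        · rw [if_neg hj0, if_neg hj1, ih hk0]
          by_cases h2 : (j : ℕ) - 1 < k
          · rw [if_pos (show ((⟨(j:ℕ)-1, _⟩ : Fin N) : ℕ) < k by simpa using h2),
              if_pos (by omega : (j:ℕ) < k + 1)]
          · by_cases h3 : (j : ℕ) - 1 = k
            · rw [if_neg (show ¬ ((⟨(j:ℕ)-1, _⟩ : Fin N) : ℕ) < k by simpa using h2),
                if_pos (show ((⟨(j:ℕ)-1, _⟩ : Fin N) : ℕ) = k by simpa using h3),
                if_neg (by omega : ¬ (j:ℕ) < k + 1), if_pos (by omega : (j:ℕ) = k + 1)]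
            · rw [if_neg (show ¬ ((⟨(j:ℕ)-1, _⟩ : Fin N) : ℕ) < k by simpa using h2),
                if_neg (show ¬ ((⟨(j:ℕ)-1, _⟩ : Fin N) : ℕ) = k by simpa using h3),
                if_neg (by omega : ¬ (j:ℕ) < k + 1), if_neg (by omega : ¬ (j:ℕ) = k + 1)]
              congr 1
              apply Fin.ext
              simp
              omega

/-- For `N ≥ 2`, on `Ω_N(ℝ)` the map `d` satisfies the graded Leibniz
rule `d(ab) = d(a)b + (−1)^{|a|} a d(b)` (for `a` homogeneous of degree `j`), satisfies
`d^N = 0`, maps `x` to `e_{N−1}` under `d^{N−1}`, and in particular `d^{N−1} ≠ 0`.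
Hence `Ω_N(ℝ)` is a proper `N`-differential graded algebra. -/
theorem omega_N_R_proper_N_dga (N : ℕ) (hN : 2 ≤ N) :
    (∀ (j : Fin N) (a b : Fin N → Polynomial ℝ), (∀ k, k ≠ j → a k = 0) →
        omegaD (omegaMul a b)
          = omegaMul (omegaD a) b + (-1 : ℝ) ^ (j : ℕ) • omegaMul a (omegaD b))
    ∧ (omegaD (N := N))^[N] = (fun _ _ => 0)
    ∧ (omegaD (N := N))^[N - 1]
        (fun j : Fin N => if (j : ℕ) = 0 then Polynomial.X else 0)
        = (fun j : Fin N => if (j : ℕ) = N - 1 then (1 : Polynomial ℝ) else 0)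
    ∧ (omegaD (N := N))^[N - 1] ≠ (fun _ _ => 0) := by
  have hN1 : 1 ≤ N - 1 := by omega
  have h3 : (omegaD (N := N))^[N - 1]
        (fun j : Fin N => if (j : ℕ) = 0 then Polynomial.X else 0)
        = (fun j : Fin N => if (j : ℕ) = N - 1 then (1 : Polynomial ℝ) else 0) := by
    funext j
    rw [omegaD_iter (N-1) hN1]
    by_cases h : (j : ℕ) < N - 1
    · rw [if_pos h, if_neg (by omega)]
    · have hj : (j : ℕ) = N - 1 := by omega
      rw [if_neg (by omega), if_pos hj, if_pos hj]
      simp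
  refine ⟨?_, ?_, h3, ?_⟩
  · -- Leibniz rule
    intro j a b ha
    funext k
    simp only [Pi.add_apply, Pi.smul_apply]
    by_cases hj0 : (j : ℕ) = 0
    · -- a supported in degree 0
      have ha' : ∀ m : Fin N, (m : ℕ) ≠ 0 → a m = 0 := by
        intro m hm
        exact ha m (fun h => hm (by rw [h, hj0]))
      by_cases hk0 : (k : ℕ) = 0
      · simp [omegaD, omegaMul, hk0, hj0]
      · by_cases hk1 : (k : ℕ) = 1
        · have h1 : a k = 0 := ha' _ (by omega)
          simp [omegaD, omegaMul, hk0, hk1, hj0, h1, derivative_mul]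
          try ring
        · have hkv : ¬ ((k : ℕ) - 1 = 0) := by omega
          have h1 : a ⟨(k:ℕ)-1, lt_of_le_of_lt (Nat.sub_le _ _) k.isLt⟩ = 0 := ha' _ (by simpa using hkv)
          have h2 : a k = 0 := ha' _ hk0
          by_cases hkk : (k : ℕ) - 1 = 1
          · simp [omegaD, omegaMul, hk0, hk1, hkv, hkk, hj0, h1, h2]
            try ring
          · simp [omegaD, omegaMul, hk0, hk1, hkv, hkk, hj0, h1, h2]
            try ring
    · -- a supported in degree j ≥ 1, so a 0 = 0
      have ha0 : a ⟨0, j.pos⟩ = 0 := ha _ (fun h => hj0 (by rw [← h]))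
      by_cases hk0 : (k : ℕ) = 0
      · simp [omegaD, omegaMul, hk0, ha0]
      · by_cases hk1 : (k : ℕ) = 1
        · simp [omegaD, omegaMul, hk0, hk1, ha0]
        · have hkv : ¬ ((k : ℕ) - 1 = 0) := by omega
          by_cases hkk : (k : ℕ) - 1 = 1
          · simp [omegaD, omegaMul, hk0, hk1, hkv, hkk, ha0]
            try ring
          · simp [omegaD, omegaMul, hk0, hk1, hkv, hkk, ha0]
            try ring
  · -- d^N = 0
    funext a j
    rw [omegaD_iter N (by omega), if_pos j.isLt]
  · intro h
    rw [h] at h3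
    have := congrFun h3 ⟨N - 1, by omega⟩
    simp at this
end

section
/- Let A and B be ℤ-graded associative algebras with degree-one derivations d_A and d_B such that d_A^N = 0 and d_B^P = 0 (so A is an N-dga and B is a P-dga). On the graded tensor product A ⊗ B, with multiplication (a⊗b)(a′⊗b′) = (−1)^{|b||a′|} aa′ ⊗ bb′, define D(a⊗b) = d_A(a)⊗b + (−1)^{|a|} a⊗d_B(b). Then D is a degree-one derivation of A ⊗ B and D^{N+P−1} = 0; that is, A ⊗ B is an (N+P−1)-differential graded algebra. -/
/-!
Write `D = X + Y` with `X = d_A ⊗ 1` and `Y = ε ⊗ d_B`, where `ε` is the grading involution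
`a ↦ (-1)^{|a|} a` of `A`. Since `d_A` raises degrees by one, `ε d_A = -d_A ε`, so `X` and `Y`
anticommute. For anticommuting `X` and `Y`, the power `(X + Y)^n` is an integer combination of
the words `X^k Y^j` with `k + j = n`; when `n = N + P - 1` each word has `k ≥ N` or `j ≥ P`,
hence vanishes. The Leibniz rule for `D` is a sign check on pure homogeneous tensors.
-/

open TensorProduct

/-- The degree-`n` part of the graded tensor product `A ⊗ B` of two ℤ-graded algebras:
the span of the pure tensors `a ⊗ b` with `a` homogeneous of degree `i`, `b` homogeneous
of degree `j` and `i + j = n`. -/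
def tensorGrade {K A B : Type*} [Field K] [Ring A] [Ring B] [Algebra K A] [Algebra K B]
    (𝒜 : ℤ → Submodule K A) (ℬ : ℤ → Submodule K B) (n : ℤ) :
    Submodule K (A ⊗[K] B) :=
  Submodule.span K
    {x | ∃ i j : ℤ, i + j = n ∧ ∃ a ∈ 𝒜 i, ∃ b ∈ ℬ j, x = a ⊗ₜ[K] b}

section Anticommute

variable {R : Type*} [Ring R] {X Y : R}

theorem pow_mul_eq_zsmul_of_anticomm (h : Y * X = -(X * Y)) (j : ℕ) :
    Y ^ j * X = ((-1 : ℤ) ^ j) • (X * Y ^ j) := by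
  induction j with
  | zero => simp
  | succ j ih =>
    rw [pow_succ, mul_assoc, h, mul_neg, ← mul_assoc, ih, smul_mul_assoc, mul_assoc, ← pow_succ,
      pow_succ (-1 : ℤ), mul_neg_one, neg_smul]

theorem add_pow_mem_closure_of_anticomm (h : Y * X = -(X * Y)) (n : ℕ) :
    (X + Y) ^ n ∈ AddSubgroup.closure {z | ∃ k j : ℕ, k + j = n ∧ z = X ^ k * Y ^ j} := by
  induction n with
  | zero => exact AddSubgroup.subset_closure ⟨0, 0, rfl, by simp⟩
  | succ n ih =>
    have hstep : AddSubgroup.closure {z | ∃ k j : ℕ, k + j = n ∧ z = X ^ k * Y ^ j} ≤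
        (AddSubgroup.closure {z | ∃ k j : ℕ, k + j = n + 1 ∧ z = X ^ k * Y ^ j}).comap
          (AddMonoidHom.mulRight (X + Y)) := by
      rw [AddSubgroup.closure_le]
      rintro _ ⟨k, j, rfl, rfl⟩
      have hword : X ^ k * Y ^ j * (X + Y) =
          ((-1 : ℤ) ^ j) • (X ^ (k + 1) * Y ^ j) + X ^ k * Y ^ (j + 1) := by
        rw [mul_add, mul_assoc, pow_mul_eq_zsmul_of_anticomm h, mul_smul_comm, ← mul_assoc,
          ← pow_succ, mul_assoc, ← pow_succ]
      simp only [SetLike.mem_coe, AddSubgroup.mem_comap, AddMonoidHom.coe_mulRight]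
      rw [hword]
      refine add_mem (zsmul_mem (AddSubgroup.subset_closure ?_) _) (AddSubgroup.subset_closure ?_)
      exacts [⟨k + 1, j, by omega, rfl⟩, ⟨k, j + 1, by omega, rfl⟩]
    rw [pow_succ]
    exact hstep ih

theorem add_pow_eq_zero_of_anticomm (h : Y * X = -(X * Y)) {N P : ℕ} (hX : X ^ N = 0)
    (hY : Y ^ P = 0) : (X + Y) ^ (N + P - 1) = 0 := by
  have hwords : {z | ∃ k j : ℕ, k + j = N + P - 1 ∧ z = X ^ k * Y ^ j} ⊆
      ((⊥ : AddSubgroup R) : Set R) := by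
    rintro _ ⟨k, j, hkj, rfl⟩
    obtain hk | hj : N ≤ k ∨ P ≤ j := by omega
    · simp [pow_eq_zero_of_le hk hX]
    · simp [pow_eq_zero_of_le hj hY]
  simpa using (AddSubgroup.closure_le _).2 hwords (add_pow_mem_closure_of_anticomm h _)

end Anticommute

theorem TensorProduct.ext_of_homogeneous {ι K A B C : Type*} [DecidableEq ι] [CommSemiring K]
    [AddCommMonoid A] [Module K A] [AddCommMonoid B] [Module K B] [AddCommMonoid C] [Module K C]
    (𝒜 : ι → Submodule K A) [DirectSum.Decomposition 𝒜] {f g : A ⊗[K] B →ₗ[K] C}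
    (h : ∀ i, ∀ a ∈ 𝒜 i, ∀ b : B, f (a ⊗ₜ b) = g (a ⊗ₜ b)) : f = g :=
  TensorProduct.ext' fun a b =>
    DirectSum.Decomposition.inductionOn 𝒜 (motive := fun a => f (a ⊗ₜ b) = g (a ⊗ₜ b))
      (by simp) (fun m => h _ _ m.2 b) (fun m m' hm hm' => by simp [add_tmul, hm, hm']) a

section GradedSign

variable {K A : Type*} [CommRing K] [AddCommGroup A] [Module K A]
  (𝒜 : ℤ → Submodule K A) [DirectSum.Decomposition 𝒜]

def gradedSign : A →ₗ[K] A :=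
  DirectSum.toModule K ℤ A (fun i => (i.negOnePow : ℤ) • (𝒜 i).subtype) ∘ₗ
    (DirectSum.decomposeLinearEquiv 𝒜).toLinearMap

variable {𝒜} in
theorem gradedSign_of_mem {i : ℤ} {a : A} (ha : a ∈ 𝒜 i) :
    gradedSign 𝒜 a = (i.negOnePow : ℤ) • a := by
  simp [gradedSign, DirectSum.decomposeLinearEquiv_apply, DirectSum.decompose_of_mem 𝒜 ha,
    ← DirectSum.lof_eq_of K]

theorem map_gradedSign_mul_rTensor {B : Type*} [AddCommGroup B] [Module K B] {d : Module.End K A}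
    (hd : ∀ i, ∀ a ∈ 𝒜 i, d a ∈ 𝒜 (i + 1)) (e : Module.End K B) :
    map (gradedSign 𝒜) e * LinearMap.rTensor B d =
      -(LinearMap.rTensor B d * map (gradedSign 𝒜) e) :=
  TensorProduct.ext_of_homogeneous 𝒜 fun i a ha b => by
    simp [gradedSign_of_mem ha, gradedSign_of_mem (hd i a ha), Int.negOnePow_succ, neg_tmul]

end GradedSign

section KoszulTensor

variable {K A B : Type*}

structure IsGradedDerivation [CommRing K] [Ring A] [Algebra K A] (𝒜 : ℤ → Submodule K A)
    (d : Module.End K A) : Prop where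
  map_mem : ∀ i, ∀ a ∈ 𝒜 i, d a ∈ 𝒜 (i + 1)
  leibniz : ∀ i, ∀ a ∈ 𝒜 i, ∀ a' : A, d (a * a') = d a * a' + (i.negOnePow : ℤ) • (a * d a')

def IsKoszulMul [CommRing K] [Ring A] [Ring B] [Algebra K A] [Algebra K B]
    (𝒜 : ℤ → Submodule K A) (ℬ : ℤ → Submodule K B)
    (mul : A ⊗[K] B →ₗ[K] A ⊗[K] B →ₗ[K] A ⊗[K] B) : Prop :=
  ∀ (j i' : ℤ) (a : A), ∀ a' ∈ 𝒜 i', ∀ b ∈ ℬ j, ∀ b' : B,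
    mul (a ⊗ₜ b) (a' ⊗ₜ b') = ((j * i').negOnePow : ℤ) • ((a * a') ⊗ₜ (b * b'))

def IsKoszulDifferential [CommRing K] [AddCommGroup A] [Module K A] [AddCommGroup B] [Module K B]
    (𝒜 : ℤ → Submodule K A) (dA : Module.End K A) (dB : Module.End K B)
    (D : Module.End K (A ⊗[K] B)) : Prop :=
  ∀ i, ∀ a ∈ 𝒜 i, ∀ b : B, D (a ⊗ₜ b) = dA a ⊗ₜ b + (i.negOnePow : ℤ) • (a ⊗ₜ dB b)

theorem IsKoszulDifferential.eq_rTensor_add_map_gradedSign [CommRing K] [AddCommGroup A]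
    [Module K A] [AddCommGroup B] [Module K B] {𝒜 : ℤ → Submodule K A} [DirectSum.Decomposition 𝒜]
    {dA : Module.End K A} {dB : Module.End K B} {D : Module.End K (A ⊗[K] B)}
    (hD : IsKoszulDifferential 𝒜 dA dB D) :
    D = LinearMap.rTensor B dA + map (gradedSign 𝒜) dB :=
  TensorProduct.ext_of_homogeneous 𝒜 fun i a ha b => by
    simp [hD i a ha b, gradedSign_of_mem ha, smul_tmul']

variable [Field K] [Ring A] [Ring B] [Algebra K A] [Algebra K B]
  {𝒜 : ℤ → Submodule K A} {ℬ : ℤ → Submodule K B} {dA : Module.End K A} {dB : Module.End K B}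
  {mul : A ⊗[K] B →ₗ[K] A ⊗[K] B →ₗ[K] A ⊗[K] B} {D : Module.End K (A ⊗[K] B)}

theorem IsKoszulDifferential.leibniz_tmul [SetLike.GradedMul 𝒜] (hA : IsGradedDerivation 𝒜 dA)
    (hB : IsGradedDerivation ℬ dB) (hmul : IsKoszulMul 𝒜 ℬ mul)
    (hD : IsKoszulDifferential 𝒜 dA dB D) {i j i' : ℤ} {a a' : A} {b : B} (ha : a ∈ 𝒜 i)
    (hb : b ∈ ℬ j) (ha' : a' ∈ 𝒜 i') (b' : B) :
    D (mul (a ⊗ₜ b) (a' ⊗ₜ b')) =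
      mul (D (a ⊗ₜ b)) (a' ⊗ₜ b') + ((i + j).negOnePow : ℤ) • mul (a ⊗ₜ b) (D (a' ⊗ₜ b')) := by
  rw [hmul j i' a a' ha' b hb b', map_zsmul, hD (i + i') _ (SetLike.mul_mem_graded ha ha'),
    hA.leibniz i a ha a', hB.leibniz j b hb b', hD i a ha b, hD i' a' ha' b']
  simp only [map_add, map_zsmul, LinearMap.add_apply, LinearMap.smul_apply,
    hmul j i' (dA a) a' ha' b hb b', hmul (j + 1) i' a a' ha' (dB b) (hB.map_mem j b hb) b',
    hmul j (i' + 1) a (dA a') (hA.map_mem i' a' ha') b hb b', hmul j i' a a' ha' b hb (dB b'),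
    add_tmul, tmul_add, tmul_smul, ← smul_tmul', smul_add, smul_smul, ← Units.val_mul,
    ← Int.negOnePow_add]
  have h₁ : (i + (j + 1) * i').negOnePow = (j * i' + (i + i')).negOnePow := congrArg _ (by ring)
  have h₂ : (i + j + j * (i' + 1)).negOnePow = (j * i' + i).negOnePow :=
    (Int.negOnePow_eq_iff _ _).2 ⟨j, by ring⟩
  have h₃ : (i + j + (i' + j * i')).negOnePow = (j * i' + (i + i' + j)).negOnePow :=
    congrArg _ (by ring)
  rw [h₁, h₂, h₃]
  abel

theorem IsKoszulDifferential.leibniz [GradedAlgebra 𝒜] (hA : IsGradedDerivation 𝒜 dA)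
    (hB : IsGradedDerivation ℬ dB) (hmul : IsKoszulMul 𝒜 ℬ mul)
    (hD : IsKoszulDifferential 𝒜 dA dB D) {n : ℤ} {x : A ⊗[K] B} (hx : x ∈ tensorGrade 𝒜 ℬ n)
    (y : A ⊗[K] B) : D (mul x y) = mul (D x) y + (n.negOnePow : ℤ) • mul x (D y) := by
  induction hx using Submodule.span_induction generalizing y with
  | mem x hx =>
    obtain ⟨i, j, rfl, a, ha, b, hb, rfl⟩ := hx
    have hlin : D ∘ₗ mul (a ⊗ₜ b) =
        mul (D (a ⊗ₜ b)) + ((i + j).negOnePow : ℤ) • (mul (a ⊗ₜ b) ∘ₗ D) :=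
      TensorProduct.ext_of_homogeneous 𝒜 fun i' a' ha' b' => by
        simpa only [LinearMap.comp_apply, LinearMap.add_apply, LinearMap.smul_apply]
          using hD.leibniz_tmul hA hB hmul ha hb ha' b'
    simpa only [LinearMap.comp_apply, LinearMap.add_apply, LinearMap.smul_apply]
      using LinearMap.congr_fun hlin y
  | zero => simp
  | add x x' _ _ hx hx' =>
    simp only [map_add, LinearMap.add_apply, hx, hx', smul_add]
    abel
  | smul c x _ hx => simp only [map_smul, LinearMap.smul_apply, hx, smul_add, smul_comm c]

theorem IsKoszulDifferential.tensorGrade_le_comap (hdA : ∀ i, ∀ a ∈ 𝒜 i, dA a ∈ 𝒜 (i + 1))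
    (hdB : ∀ j, ∀ b ∈ ℬ j, dB b ∈ ℬ (j + 1)) (hD : IsKoszulDifferential 𝒜 dA dB D) (n : ℤ) :
    tensorGrade 𝒜 ℬ n ≤ (tensorGrade 𝒜 ℬ (n + 1)).comap D := by
  refine Submodule.span_le.2 ?_
  rintro _ ⟨i, j, rfl, a, ha, b, hb, rfl⟩
  rw [SetLike.mem_coe, Submodule.mem_comap, hD i a ha b]
  refine add_mem (Submodule.subset_span ?_)
    (Submodule.smul_of_tower_mem _ _ (Submodule.subset_span ?_))
  exacts [⟨i + 1, j, by ring, dA a, hdA i a ha, b, hb, rfl⟩,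
    ⟨i, j + 1, by ring, a, ha, dB b, hdB j b hb, rfl⟩]

end KoszulTensor

theorem graded_tensor_product_N_dga_general
    {K A B : Type*} [Field K] [Ring A] [Ring B] [Algebra K A] [Algebra K B]
    (𝒜 : ℤ → Submodule K A) (ℬ : ℤ → Submodule K B)
    [GradedAlgebra 𝒜]
    (dA : Module.End K A) (dB : Module.End K B)
    (hdA_deg : ∀ (i : ℤ), ∀ a ∈ 𝒜 i, dA a ∈ 𝒜 (i + 1))
    (hdB_deg : ∀ (j : ℤ), ∀ b ∈ ℬ j, dB b ∈ ℬ (j + 1))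
    (hdA_leib : ∀ (i : ℤ), ∀ a ∈ 𝒜 i, ∀ a' : A,
      dA (a * a') = dA a * a' + ((i.negOnePow : ℤ)) • (a * dA a'))
    (hdB_leib : ∀ (j : ℤ), ∀ b ∈ ℬ j, ∀ b' : B,
      dB (b * b') = dB b * b' + ((j.negOnePow : ℤ)) • (b * dB b'))
    (N P : ℕ)
    (hdAN : dA ^ N = 0) (hdBP : dB ^ P = 0)
    -- the Koszul-sign multiplication on `A ⊗ B`
    (mul : (A ⊗[K] B) →ₗ[K] (A ⊗[K] B) →ₗ[K] (A ⊗[K] B))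
    (hmul : ∀ (j i' : ℤ), ∀ (a : A), ∀ a' ∈ 𝒜 i', ∀ b ∈ ℬ j, ∀ b' : B,
      mul (a ⊗ₜ[K] b) (a' ⊗ₜ[K] b')
        = (((j * i').negOnePow : ℤ)) • ((a * a') ⊗ₜ[K] (b * b')))
    -- the map `D(a⊗b) = dA(a)⊗b + (−1)^{|a|} a⊗dB(b)`
    (D : Module.End K (A ⊗[K] B))
    (hD : ∀ (i : ℤ), ∀ a ∈ 𝒜 i, ∀ b : B,
      D (a ⊗ₜ[K] b) = dA a ⊗ₜ[K] b + ((i.negOnePow : ℤ)) • (a ⊗ₜ[K] dB b)) :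
    (∀ (n : ℤ), ∀ x ∈ tensorGrade 𝒜 ℬ n, ∀ y : A ⊗[K] B,
        D (mul x y) = mul (D x) y + ((n.negOnePow : ℤ)) • mul x (D y))
    ∧ (∀ (n : ℤ), ∀ x ∈ tensorGrade 𝒜 ℬ n, D x ∈ tensorGrade 𝒜 ℬ (n + 1))
    ∧ D ^ (N + P - 1) = 0 := by
  have hD' : IsKoszulDifferential 𝒜 dA dB D := hD
  have hA : IsGradedDerivation 𝒜 dA := ⟨hdA_deg, hdA_leib⟩
  have hB : IsGradedDerivation ℬ dB := ⟨hdB_deg, hdB_leib⟩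
  refine ⟨fun n x hx y => hD'.leibniz hA hB hmul hx y,
    fun n x hx => hD'.tensorGrade_le_comap hdA_deg hdB_deg n hx, ?_⟩
  have hXN : LinearMap.rTensor B dA ^ N = 0 := by
    rw [LinearMap.rTensor_pow, hdAN, LinearMap.rTensor_zero]
  have hYP : map (gradedSign 𝒜) dB ^ P = 0 := by
    rw [TensorProduct.map_pow, hdBP, TensorProduct.map_zero_right]
  rw [hD'.eq_rTensor_add_map_gradedSign]
  exact add_pow_eq_zero_of_anticomm (map_gradedSign_mul_rTensor 𝒜 hdA_deg dB) hXN hYP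

/-- Let `A` be an `N`-dga and `B` a `P`-dga (ℤ-graded, with degree-one
derivations `dA`, `dB`, `dA^N = 0`, `dB^P = 0`).  On the graded tensor product `A ⊗ B`,
with Koszul multiplication `(a⊗b)(a′⊗b′) = (−1)^{|b||a′|} aa′ ⊗ bb′`, the map
`D(a⊗b) = dA(a)⊗b + (−1)^{|a|} a⊗dB(b)` is a degree-one derivation and `D^{N+P−1} = 0`;
that is, `A ⊗ B` is an `(N+P−1)`-differential graded algebra. -/
theorem graded_tensor_product_N_dga
    {K A B : Type*} [Field K] [Ring A] [Ring B] [Algebra K A] [Algebra K B]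
    (𝒜 : ℤ → Submodule K A) (ℬ : ℤ → Submodule K B)
    [GradedAlgebra 𝒜] [GradedAlgebra ℬ]
    (dA : Module.End K A) (dB : Module.End K B)
    (hdA_deg : ∀ (i : ℤ), ∀ a ∈ 𝒜 i, dA a ∈ 𝒜 (i + 1))
    (hdB_deg : ∀ (j : ℤ), ∀ b ∈ ℬ j, dB b ∈ ℬ (j + 1))
    (hdA_leib : ∀ (i : ℤ), ∀ a ∈ 𝒜 i, ∀ a' : A,
      dA (a * a') = dA a * a' + ((i.negOnePow : ℤ)) • (a * dA a'))
    (hdB_leib : ∀ (j : ℤ), ∀ b ∈ ℬ j, ∀ b' : B,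
      dB (b * b') = dB b * b' + ((j.negOnePow : ℤ)) • (b * dB b'))
    (N P : ℕ) (hN : 1 ≤ N) (hP : 1 ≤ P)
    (hdAN : dA ^ N = 0) (hdBP : dB ^ P = 0)
    -- the Koszul-sign multiplication on `A ⊗ B`
    (mul : (A ⊗[K] B) →ₗ[K] (A ⊗[K] B) →ₗ[K] (A ⊗[K] B))
    (hmul : ∀ (j i' : ℤ), ∀ (a : A), ∀ a' ∈ 𝒜 i', ∀ b ∈ ℬ j, ∀ b' : B,
      mul (a ⊗ₜ[K] b) (a' ⊗ₜ[K] b')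
        = (((j * i').negOnePow : ℤ)) • ((a * a') ⊗ₜ[K] (b * b')))
    -- the map `D(a⊗b) = dA(a)⊗b + (−1)^{|a|} a⊗dB(b)`
    (D : Module.End K (A ⊗[K] B))
    (hD : ∀ (i : ℤ), ∀ a ∈ 𝒜 i, ∀ b : B,
      D (a ⊗ₜ[K] b) = dA a ⊗ₜ[K] b + ((i.negOnePow : ℤ)) • (a ⊗ₜ[K] dB b)) :
    (∀ (n : ℤ), ∀ x ∈ tensorGrade 𝒜 ℬ n, ∀ y : A ⊗[K] B,
        D (mul x y) = mul (D x) y + ((n.negOnePow : ℤ)) • mul x (D y))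
    ∧ (∀ (n : ℤ), ∀ x ∈ tensorGrade 𝒜 ℬ n, D x ∈ tensorGrade 𝒜 ℬ (n + 1))
    ∧ D ^ (N + P - 1) = 0 :=
  graded_tensor_product_N_dga_general 𝒜 ℬ dA dB hdA_deg hdB_deg hdA_leib hdB_leib N P hdAN hdBP mul
    hmul D hD
end

section
/- Fix integers n ≥ 1 and N ≥ 2. Let M be the space of families ω = (ω_J) indexed by functions J : {1,…,n} → {0,1,…,N−1}, with each component ω_J ∈ ℝ[x₁,…,x_n], and let d : M → M be the linear map (dω)_J = Σ_{i : J(i)=1} (−1)^{|J_{<i}|} ∂ω_{J−eᵢ}/∂xᵢ + Σ_{i : J(i)≥2} (−1)^{|J_{<i}|} ω_{J−eᵢ}, where |J_{<i}| = Σ_{k<i} J(k) and J−eᵢ is J with its value at i decreased by 1 (this is the differential of the algebra Ω_N(ℝⁿ) of polynomial differential forms of depth N on ℝⁿ, written in components ω = Σ_J ω_J ∏ᵢ d^{J(i)}xᵢ). Then d^{n(N−1)+1} = 0; that is, Ω_N(ℝⁿ) is an (n(N−1)+1)-complex. -/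
/-- The differential `d` of the algebra `Ω_N(ℝⁿ)` of polynomial differential forms of
depth `N` on `ℝⁿ`, written in components `ω = Σ_J ω_J ∏ᵢ d^{J(i)}xᵢ` with
`J : Fin n → Fin N` and `ω_J ∈ ℝ[x₁,…,x_n]`:
`(dω)_J = Σ_{i : J(i)=1} (−1)^{|J_{<i}|} ∂ω_{J−eᵢ}/∂xᵢ + Σ_{i : J(i)≥2} (−1)^{|J_{<i}|} ω_{J−eᵢ}`,
where `|J_{<i}| = Σ_{k<i} J(k)`. -/
noncomputable def depthDiff (n N : ℕ)
    (ω : (Fin n → Fin N) → MvPolynomial (Fin n) ℝ) :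
    (Fin n → Fin N) → MvPolynomial (Fin n) ℝ :=
  fun J =>
    ∑ i : Fin n,
      if (J i : ℕ) = 1 then
        (-1 : MvPolynomial (Fin n) ℝ) ^
            (∑ k ∈ Finset.univ.filter (fun k : Fin n => k < i), (J k : ℕ)) *
          MvPolynomial.pderiv i (ω (decrIdx J i))
      else if 2 ≤ (J i : ℕ) then
        (-1 : MvPolynomial (Fin n) ℝ) ^
            (∑ k ∈ Finset.univ.filter (fun k : Fin n => k < i), (J k : ℕ)) *
          ω (decrIdx J i)
      else 0

lemma decrIdx_sum_lt {n N : ℕ} (J : Fin n → Fin N) (i : Fin n) (hi : 1 ≤ (J i : ℕ)) :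
    (∑ k, ((decrIdx J i k : ℕ))) < ∑ k, (J k : ℕ) := by
  classical
  have h1 : (∑ k, ((decrIdx J i k : ℕ))) =
      ((J i : ℕ) - 1) + ∑ k ∈ Finset.univ.erase i, (J k : ℕ) := by
    rw [← Finset.add_sum_erase _ _ (Finset.mem_univ i)]
    congr 1
    · simp [decrIdx]
    · apply Finset.sum_congr rfl
      intro k hk
      simp only [Finset.mem_erase] at hk
      simp [decrIdx, Function.update_of_ne hk.1]
  have h2 : (∑ k, (J k : ℕ)) = (J i : ℕ) + ∑ k ∈ Finset.univ.erase i, (J k : ℕ) :=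
    (Finset.add_sum_erase _ _ (Finset.mem_univ i)).symm
  omega

lemma depthDiff_iterate_zero (n N : ℕ) (m : ℕ)
    (ω : (Fin n → Fin N) → MvPolynomial (Fin n) ℝ) (J : Fin n → Fin N)
    (hJ : (∑ k, (J k : ℕ)) < m) :
    (depthDiff n N)^[m] ω J = 0 := by
  induction m generalizing ω J with
  | zero => omega
  | succ m ih =>
    rw [Function.iterate_succ_apply']
    set g := (depthDiff n N)^[m] ω with hg
    unfold depthDiff
    apply Finset.sum_eq_zero
    intro i _
    split_ifs with h1 h2
    · have := ih ω (decrIdx J i)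
        (lt_of_lt_of_le (decrIdx_sum_lt J i (by omega)) (by omega))
      rw [← hg] at this
      rw [this]
      simp
    · have := ih ω (decrIdx J i)
        (lt_of_lt_of_le (decrIdx_sum_lt J i (by omega)) (by omega))
      rw [← hg] at this
      rw [this, mul_zero]
    · rfl

/-- For `n ≥ 1`, `N ≥ 2`, the differential of the algebra `Ω_N(ℝⁿ)` of
polynomial differential forms of depth `N` on `ℝⁿ` satisfies `d^{n(N−1)+1} = 0`:
`Ω_N(ℝⁿ)` is an `(n(N−1)+1)`-complex. -/
theorem depth_N_forms_complex (n N : ℕ) (hn : 1 ≤ n) (hN : 2 ≤ N) :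
    (depthDiff n N)^[n * (N - 1) + 1] = fun _ _ => 0 := by
  funext ω J
  apply depthDiff_iterate_zero
  have : ∀ k : Fin n, (J k : ℕ) ≤ N - 1 := fun k => by
    have := (J k).isLt; omega
  calc (∑ k, (J k : ℕ)) ≤ ∑ _k : Fin n, (N - 1) := Finset.sum_le_sum fun k _ => this k
    _ = n * (N - 1) := by simp [Finset.sum_const, mul_comm]
    _ < n * (N - 1) + 1 := Nat.lt_succ_self _
end

section
/- Let 𝔤 be a vector space over a field of characteristic zero with an antisymmetric bilinear bracket [·,·] (no Jacobi identity assumed), and let d denote the Chevalley–Eilenberg operator. Then d(d(dθ)) = 0 for every linear functional θ ∈ 𝔤* if and only if for all v₁, v₂, v₃, v₄ ∈ 𝔤: Σ_{σ ∈ Sh(2,1,1)} sgn(σ) [[[v_{σ(1)},v_{σ(2)}],v_{σ(3)}],v_{σ(4)}] = Σ_{σ ∈ Sh(2,2)} sgn(σ) [[v_{σ(1)},v_{σ(2)}],[v_{σ(3)},v_{σ(4)}]]. (This is the characterization of (𝔤,[·,·]) being a 3 Lie algebra: the third power of d, computed on the generators 𝔤* of the exterior algebra, vanishes exactly when this bracket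 identity holds.) -/
/-- The Chevalley–Eilenberg operator (on raw `k`-multilinear-form data):
`dθ(v₁,…,v_{k+1}) = Σ_{i<j} (−1)^{i+j} θ([vᵢ,vⱼ], v₁, …, v̂ᵢ, …, v̂ⱼ, …, v_{k+1})`. -/
def CEraw {K g : Type*} [Field K] [AddCommGroup g] [Module K g]
    (B : g → g → g) {k : ℕ} (θ : (Fin k → g) → K) : (Fin (k + 1) → g) → K :=
  fun v =>
    ∑ p ∈ Finset.univ.filter (fun p : Fin (k + 1) × Fin (k + 1) => p.1 < p.2),
      (-1 : K) ^ ((p.1 : ℕ) + (p.2 : ℕ)) *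
        θ (fun l => if (l : ℕ) = 0 then B (v p.1) (v p.2)
            else v (((List.finRange (k + 1)).filter
                (fun x => decide (x ≠ p.1 ∧ x ≠ p.2))).getD ((l : ℕ) - 1) p.1))


section Aux

variable {K g : Type*} [Field K] [AddCommGroup g] [Module K g]
  (B : g →ₗ[K] g →ₗ[K] g) (v : Fin 4 → g)

/-- Explicit form of the `Sh(2,1,1)` sum. -/
def Lexpr : g :=
      B (B (B (v 0) (v 1)) (v 2)) (v 3)
      - B (B (B (v 0) (v 1)) (v 3)) (v 2)
      - B (B (B (v 0) (v 2)) (v 1)) (v 3)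
      + B (B (B (v 0) (v 2)) (v 3)) (v 1)
      + B (B (B (v 0) (v 3)) (v 1)) (v 2)
      - B (B (B (v 0) (v 3)) (v 2)) (v 1)
      + B (B (B (v 1) (v 2)) (v 0)) (v 3)
      - B (B (B (v 1) (v 2)) (v 3)) (v 0)
      - B (B (B (v 1) (v 3)) (v 0)) (v 2)
      + B (B (B (v 1) (v 3)) (v 2)) (v 0)
      + B (B (B (v 2) (v 3)) (v 0)) (v 1)
      - B (B (B (v 2) (v 3)) (v 1)) (v 0)

/-- Explicit form of the `Sh(2,2)` sum. -/
def Rexpr : g :=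
      B (B (v 0) (v 1)) (B (v 2) (v 3))
      - B (B (v 0) (v 2)) (B (v 1) (v 3))
      + B (B (v 0) (v 3)) (B (v 1) (v 2))
      + B (B (v 1) (v 2)) (B (v 0) (v 3))
      - B (B (v 1) (v 3)) (B (v 0) (v 2))
      + B (B (v 2) (v 3)) (B (v 0) (v 1))

lemma Lexp :
    (∑ σ ∈ Finset.univ.filter (fun σ : Equiv.Perm (Fin 4) => σ 0 < σ 1),
        (Equiv.Perm.sign σ : ℤ) •
          B (B (B (v (σ 0)) (v (σ 1))) (v (σ 2))) (v (σ 3))) = Lexpr B v := by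
  rw [show (Finset.univ.filter (fun σ : Equiv.Perm (Fin 4) => σ 0 < σ 1)) =
    ({(Equiv.mk ![0,1,2,3] ![0,1,2,3] (by decide) (by decide)),
      (Equiv.mk ![0,1,3,2] ![0,1,3,2] (by decide) (by decide)),
      (Equiv.mk ![0,2,1,3] ![0,2,1,3] (by decide) (by decide)),
      (Equiv.mk ![0,2,3,1] ![0,3,1,2] (by decide) (by decide)),
      (Equiv.mk ![0,3,1,2] ![0,2,3,1] (by decide) (by decide)),
      (Equiv.mk ![0,3,2,1] ![0,3,2,1] (by decide) (by decide)),
      (Equiv.mk ![1,2,0,3] ![2,0,1,3] (by decide) (by decide)),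
      (Equiv.mk ![1,2,3,0] ![3,0,1,2] (by decide) (by decide)),
      (Equiv.mk ![1,3,0,2] ![2,0,3,1] (by decide) (by decide)),
      (Equiv.mk ![1,3,2,0] ![3,0,2,1] (by decide) (by decide)),
      (Equiv.mk ![2,3,0,1] ![2,3,0,1] (by decide) (by decide)),
      (Equiv.mk ![2,3,1,0] ![3,2,0,1] (by decide) (by decide))} :
      Finset (Equiv.Perm (Fin 4))) by decide]
  rw [Finset.sum_insert (by decide), Finset.sum_insert (by decide),
    Finset.sum_insert (by decide), Finset.sum_insert (by decide),
    Finset.sum_insert (by decide), Finset.sum_insert (by decide),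
    Finset.sum_insert (by decide), Finset.sum_insert (by decide),
    Finset.sum_insert (by decide), Finset.sum_insert (by decide),
    Finset.sum_insert (by decide), Finset.sum_singleton]
  simp only [Equiv.coe_fn_mk, Matrix.cons_val_zero, Matrix.cons_val_one, Matrix.head_cons,
    Matrix.cons_val_two, Matrix.tail_cons, Matrix.cons_val_three, Matrix.cons_val_fin_one]
  simp only [
    show Equiv.Perm.sign (Equiv.mk ![0,1,2,3] ![0,1,2,3] (by decide) (by decide) : Equiv.Perm (Fin 4)) = 1 from by decide,
    show Equiv.Perm.sign (Equiv.mk ![0,1,3,2] ![0,1,3,2] (by decide) (by decide) : Equiv.Perm (Fin 4)) = -1 from by decide,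
    show Equiv.Perm.sign (Equiv.mk ![0,2,1,3] ![0,2,1,3] (by decide) (by decide) : Equiv.Perm (Fin 4)) = -1 from by decide,
    show Equiv.Perm.sign (Equiv.mk ![0,2,3,1] ![0,3,1,2] (by decide) (by decide) : Equiv.Perm (Fin 4)) = 1 from by decide,
    show Equiv.Perm.sign (Equiv.mk ![0,3,1,2] ![0,2,3,1] (by decide) (by decide) : Equiv.Perm (Fin 4)) = 1 from by decide,
    show Equiv.Perm.sign (Equiv.mk ![0,3,2,1] ![0,3,2,1] (by decide) (by decide) : Equiv.Perm (Fin 4)) = -1 from by decide,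
    show Equiv.Perm.sign (Equiv.mk ![1,2,0,3] ![2,0,1,3] (by decide) (by decide) : Equiv.Perm (Fin 4)) = 1 from by decide,
    show Equiv.Perm.sign (Equiv.mk ![1,2,3,0] ![3,0,1,2] (by decide) (by decide) : Equiv.Perm (Fin 4)) = -1 from by decide,
    show Equiv.Perm.sign (Equiv.mk ![1,3,0,2] ![2,0,3,1] (by decide) (by decide) : Equiv.Perm (Fin 4)) = -1 from by decide,
    show Equiv.Perm.sign (Equiv.mk ![1,3,2,0] ![3,0,2,1] (by decide) (by decide) : Equiv.Perm (Fin 4)) = 1 from by decide,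
    show Equiv.Perm.sign (Equiv.mk ![2,3,0,1] ![2,3,0,1] (by decide) (by decide) : Equiv.Perm (Fin 4)) = 1 from by decide,
    show Equiv.Perm.sign (Equiv.mk ![2,3,1,0] ![3,2,0,1] (by decide) (by decide) : Equiv.Perm (Fin 4)) = -1 from by decide,
    Units.val_one, Int.cast_one, one_smul, Units.val_neg, Int.cast_neg, neg_smul, neg_neg]
  unfold Lexpr
  abel

lemma Rexp :
    (∑ σ ∈ Finset.univ.filter
          (fun σ : Equiv.Perm (Fin 4) => σ 0 < σ 1 ∧ σ 2 < σ 3),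
        (Equiv.Perm.sign σ : ℤ) •
          B (B (v (σ 0)) (v (σ 1))) (B (v (σ 2)) (v (σ 3)))) = Rexpr B v := by
  rw [show (Finset.univ.filter (fun σ : Equiv.Perm (Fin 4) => σ 0 < σ 1 ∧ σ 2 < σ 3)) =
    ({(Equiv.mk ![0,1,2,3] ![0,1,2,3] (by decide) (by decide)),
      (Equiv.mk ![0,2,1,3] ![0,2,1,3] (by decide) (by decide)),
      (Equiv.mk ![0,3,1,2] ![0,2,3,1] (by decide) (by decide)),
      (Equiv.mk ![1,2,0,3] ![2,0,1,3] (by decide) (by decide)),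
      (Equiv.mk ![1,3,0,2] ![2,0,3,1] (by decide) (by decide)),
      (Equiv.mk ![2,3,0,1] ![2,3,0,1] (by decide) (by decide))} :
      Finset (Equiv.Perm (Fin 4))) by decide]
  rw [Finset.sum_insert (by decide), Finset.sum_insert (by decide),
    Finset.sum_insert (by decide), Finset.sum_insert (by decide),
    Finset.sum_insert (by decide), Finset.sum_singleton]
  simp only [Equiv.coe_fn_mk, Matrix.cons_val_zero, Matrix.cons_val_one, Matrix.head_cons,
    Matrix.cons_val_two, Matrix.tail_cons, Matrix.cons_val_three, Matrix.cons_val_fin_one]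
  simp only [
    show Equiv.Perm.sign (Equiv.mk ![0,1,2,3] ![0,1,2,3] (by decide) (by decide) : Equiv.Perm (Fin 4)) = 1 from by decide,
    show Equiv.Perm.sign (Equiv.mk ![0,2,1,3] ![0,2,1,3] (by decide) (by decide) : Equiv.Perm (Fin 4)) = -1 from by decide,
    show Equiv.Perm.sign (Equiv.mk ![0,3,1,2] ![0,2,3,1] (by decide) (by decide) : Equiv.Perm (Fin 4)) = 1 from by decide,
    show Equiv.Perm.sign (Equiv.mk ![1,2,0,3] ![2,0,1,3] (by decide) (by decide) : Equiv.Perm (Fin 4)) = 1 from by decide,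
    show Equiv.Perm.sign (Equiv.mk ![1,3,0,2] ![2,0,3,1] (by decide) (by decide) : Equiv.Perm (Fin 4)) = -1 from by decide,
    show Equiv.Perm.sign (Equiv.mk ![2,3,0,1] ![2,3,0,1] (by decide) (by decide) : Equiv.Perm (Fin 4)) = 1 from by decide,
    Units.val_one, Int.cast_one, one_smul, Units.val_neg, Int.cast_neg, neg_smul, neg_neg]
  unfold Rexpr
  abel

lemma Rzero (hanti : ∀ v w : g, B v w = - B w v) : Rexpr B v = 0 := by
  unfold Rexpr
  rw [hanti (B (v 1) (v 2)) (B (v 0) (v 3)),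
    hanti (B (v 1) (v 3)) (B (v 0) (v 2)),
    hanti (B (v 2) (v 3)) (B (v 0) (v 1))]
  abel

lemma CEexp (hanti : ∀ v w : g, B v w = - B w v) (θ : g →ₗ[K] K) :
    CEraw (fun a b => B a b)
          (CEraw (fun a b => B a b)
            (CEraw (fun a b => B a b) (fun w : Fin 1 → g => θ (w 0)))) v
      = - θ (Lexpr B v) := by
  simp only [CEraw]
  rw [show (Finset.univ.filter (fun p : Fin 4 × Fin 4 => p.1 < p.2)) = {(0,1),(0,2),(0,3),(1,2),(1,3),(2,3)} by decide]
  rw [show (Finset.univ.filter (fun p : Fin 3 × Fin 3 => p.1 < p.2)) = {(0,1),(0,2),(1,2)} by decide]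
  rw [show (Finset.univ.filter (fun p : Fin 2 × Fin 2 => p.1 < p.2)) = {(0,1)} by decide]
  simp [Finset.sum_insert, List.finRange, List.filter]
  rw [hanti (B (v 2) (v 3)) (B (v 0) (v 1)),
    hanti (B (v 1) (v 3)) (B (v 0) (v 2)),
    hanti (B (v 1) (v 2)) (B (v 0) (v 3))]
  unfold Lexpr
  simp only [map_add, map_sub, map_neg,
    show ((3 : Fin 4) : ℕ) = 3 from rfl, show ((2 : Fin 4) : ℕ) = 2 from rfl]
  ring

end Aux

/-- Let `𝔤` be a vector space over a field of characteristic zero with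
an antisymmetric bilinear bracket (no Jacobi identity assumed) and `d` the
Chevalley–Eilenberg operator.  Then `d(d(dθ)) = 0` for every linear functional `θ ∈ 𝔤*`
if and only if for all `v₁,v₂,v₃,v₄`:
`Σ_{σ ∈ Sh(2,1,1)} sgn(σ) [[[v_{σ(1)},v_{σ(2)}],v_{σ(3)}],v_{σ(4)}]
  = Σ_{σ ∈ Sh(2,2)} sgn(σ) [[v_{σ(1)},v_{σ(2)}],[v_{σ(3)},v_{σ(4)}]]`;
this characterizes `(𝔤,[·,·])` being a 3 Lie algebra. -/
theorem CE_three_nilpotent_iff_three_lie_algebra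
    {K g : Type*} [Field K] [CharZero K] [AddCommGroup g] [Module K g]
    (B : g →ₗ[K] g →ₗ[K] g) (hanti : ∀ v w : g, B v w = - B w v) :
    (∀ (θ : g →ₗ[K] K) (v : Fin 4 → g),
        CEraw (fun a b => B a b)
          (CEraw (fun a b => B a b)
            (CEraw (fun a b => B a b) (fun w : Fin 1 → g => θ (w 0)))) v = 0)
      ↔ (∀ v : Fin 4 → g,
          (∑ σ ∈ Finset.univ.filter (fun σ : Equiv.Perm (Fin 4) => σ 0 < σ 1),
              (Equiv.Perm.sign σ : ℤ) •
                B (B (B (v (σ 0)) (v (σ 1))) (v (σ 2))) (v (σ 3)))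
            = ∑ σ ∈ Finset.univ.filter
                  (fun σ : Equiv.Perm (Fin 4) => σ 0 < σ 1 ∧ σ 2 < σ 3),
                (Equiv.Perm.sign σ : ℤ) •
                  B (B (v (σ 0)) (v (σ 1))) (B (v (σ 2)) (v (σ 3)))) := by
  constructor
  · intro h v
    rw [Lexp, Rexp, Rzero B v hanti]
    rw [← Module.forall_dual_apply_eq_zero_iff K]
    intro θ
    have := h θ v
    rw [CEexp B v hanti θ, neg_eq_zero] at this
    exact this
  · intro h θ v
    rw [CEexp B v hanti θ]
    have hv := h v
    rw [Lexp, Rexp, Rzero B v hanti] at hv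
    rw [hv, map_zero, neg_zero]
end
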